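/- arXiv:0812.0214 — 3 statements merged into one kernel-verified Lean document; each statement's English description precedes it below -/
import Mathlib

section
/- Let X, Y ⊆ I be Lebesgue measurable sets of measure 1 and let ψ be a bijection from X onto Y such that for every interval J ⊆ I the sets ψ(J ∩ X) and ψ⁻¹(J ∩ Y) are Lebesgue measurable with μ(ψ(J ∩ X)) = μ(ψ⁻¹(J ∩ Y)) = μ(J). Then there is φ ∈ Φ₀ such that φ(x) = ψ(x) for almost every x ∈ I. -/
open MeasureTheory Set
open scoped symmDiff

noncomputable section

/-- The unit interval `[0,1]` with Lebesgue measure. -/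
abbrev I01 : Type := unitInterval

/-- A graphon: a bounded symmetric Lebesgue(=a.e.)-measurable function on `I² `. -/
def IsGraphon (W : I01 × I01 → ℝ) : Prop :=
  (∀ x y : I01, W (x, y) = W (y, x)) ∧ (∃ C : ℝ, ∀ p, |W p| ≤ C) ∧ AEMeasurable W volume

/-- The cut norm of `W`. -/
def cutNorm (W : I01 × I01 → ℝ) : ℝ :=
  sSup { r : ℝ | ∃ S T : Set I01, NullMeasurableSet S volume ∧ NullMeasurableSet T volume ∧
    r = |∫ p in S ×ˢ T, W p| }

/-- The `L¹` norm of `W`. -/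
def l1Norm (W : I01 × I01 → ℝ) : ℝ := ∫ p, |W p|

/-- Lebesgue-measurable measure preserving self-maps of `[0,1]` (the class `Φ`). -/
def MPhi (φ : I01 → I01) : Prop :=
  AEMeasurable φ volume ∧
    ∀ A : Set I01, NullMeasurableSet A volume → volume (φ ⁻¹' A) = volume A

/-- Invertible measure preserving maps (the class `Φ₀`). -/
def MPhi0 (φ : I01 → I01) : Prop :=
  Function.Bijective φ ∧ MPhi φ ∧ MPhi (Function.invFun φ)

/-- `W^φ (x,y) = W (φ x, φ y)`. -/
def compMap (W : I01 × I01 → ℝ) (φ : I01 → I01) : I01 × I01 → ℝ :=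
  fun p => W (φ p.1, φ p.2)

/-- The distance `δ₁` on graphons. -/
def gDelta1 (U W : I01 × I01 → ℝ) : ℝ :=
  sInf { r : ℝ | ∃ φ : I01 → I01, MPhi0 φ ∧ r = l1Norm (fun p => U p - compMap W φ p) }

/-- The cut distance `δ_□` on graphons. -/
def gDeltaBox (U W : I01 × I01 → ℝ) : ℝ :=
  sInf { r : ℝ | ∃ φ : I01 → I01, MPhi0 φ ∧ r = cutNorm (fun p => U p - compMap W φ p) }

open Classical in
/-- The homomorphism density `t(F,W)` of a graph `F` on `[k]` in `W`. -/
def homDensity {k : ℕ} (F : SimpleGraph (Fin k)) (W : I01 × I01 → ℝ) : ℝ :=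
  ∫ x : Fin k → I01,
    ∏ e ∈ Finset.univ.filter (fun e : Fin k × Fin k => e.1 < e.2 ∧ F.Adj e.1 e.2),
      W (x e.1, x e.2)

open Classical in
/-- The real-valued adjacency indicator of a graph. -/
def adjInd {V : Type*} (G : SimpleGraph V) (i j : V) : ℝ := if G.Adj i j then 1 else 0

/-- Overlay matrices: nonnegative with row sums `1/m` and column sums `1/n`. -/
def IsOverlay (m n : ℕ) (A : Matrix (Fin m) (Fin n) ℝ) : Prop :=
  (∀ i j, 0 ≤ A i j) ∧ (∀ i, ∑ j, A i j = 1 / (m : ℝ)) ∧ (∀ j, ∑ i, A i j = 1 / (n : ℝ))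

/-- The fractional distance `δ₁` between two graphs. -/
def graphDelta1 {m n : ℕ} (G : SimpleGraph (Fin m)) (H : SimpleGraph (Fin n)) : ℝ :=
  sInf { r : ℝ | ∃ A : Matrix (Fin m) (Fin n) ℝ, IsOverlay m n A ∧
    r = ∑ i, ∑ j, ∑ g, ∑ h, A i g * A j h * |adjInd G i j - adjInd H g h| }

/-- The edit distance `δ̂₁` between two graphs on `[n]`. -/
def editDist {n : ℕ} (G H : SimpleGraph (Fin n)) : ℝ :=
  (2 / (n : ℝ) ^ 2) *
    sInf { r : ℝ | ∃ σ : Fin n ≃ Fin n,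
      r = (∑ i, ∑ j, |adjInd G (σ i) (σ j) - adjInd H i j|) / 2 }

open Classical in
/-- The step graphon `W_G` associated with a graph `G` on `[n]`. -/
def stepGraphon {n : ℕ} (G : SimpleGraph (Fin n)) : I01 × I01 → ℝ :=
  fun p => if ∃ k l : Fin n, G.Adj k l ∧
      ((k : ℕ) : ℝ) / n ≤ (p.1 : ℝ) ∧ (p.1 : ℝ) < ((k : ℕ) + 1 : ℝ) / n ∧
      ((l : ℕ) : ℝ) / n ≤ (p.2 : ℝ) ∧ (p.2 : ℝ) < ((l : ℕ) + 1 : ℝ) / n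
    then 1 else 0

/-!
Pulled back along `ψ` (resp. along its inverse `χ` on `Y`), Lebesgue measure agrees with
itself on the intervals `[0, b]`, hence everywhere: `ψ` and `χ` are measure preserving. To
turn `ψ` into a bijection of `I`, shrink `X` to `X' = X \ (C ∪ ψ⁻¹ C)` for a null set `C` of
the cardinality of the continuum (the Cantor set). Both `X'` and `ψ X'` are conull and their
complements contain `C`, so they have the same cardinality; gluing `ψ` on `X'` with any
bijection between the complements gives a bijection `φ` with `φ = ψ` and `φ⁻¹ = χ` almost
everywhere, hence `φ ∈ Φ₀`.
-/

open Cardinal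

universe u

lemma volume_preCantorSet_le (n : ℕ) : volume (preCantorSet n) ≤ ENNReal.ofReal ((2 / 3) ^ n) := by
  induction n with
  | zero => simp
  | succ n ih =>
    have hleft : (· / 3) = AffineMap.homothety (0 : ℝ) (1 / 3 : ℝ) := by
      ext x; simp only [AffineMap.homothety_apply, vsub_eq_sub, smul_eq_mul, vadd_eq_add]; ring
    have hright : (fun x : ℝ ↦ (2 + x) / 3) = AffineMap.homothety (1 : ℝ) (1 / 3 : ℝ) := by
      ext x; simp only [AffineMap.homothety_apply, vsub_eq_sub, smul_eq_mul, vadd_eq_add]; ring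
    calc volume (preCantorSet (n + 1))
        ≤ volume ((· / 3) '' preCantorSet n) + volume ((fun x ↦ (2 + x) / 3) '' preCantorSet n) :=
          measure_union_le _ _
      _ = ENNReal.ofReal (2 / 3) * volume (preCantorSet n) := by
          rw [hleft, hright, Measure.addHaar_image_homothety, Measure.addHaar_image_homothety,
            ← add_mul, ← ENNReal.ofReal_add (by positivity) (by positivity)]
          norm_num
      _ ≤ ENNReal.ofReal (2 / 3) * ENNReal.ofReal ((2 / 3) ^ n) := by gcongr
      _ = ENNReal.ofReal ((2 / 3) ^ (n + 1)) := by
          rw [← ENNReal.ofReal_mul (by positivity), pow_succ, mul_comm]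

lemma volume_cantorSet : volume cantorSet = 0 := by
  have hlim : Filter.Tendsto (fun n : ℕ ↦ ENNReal.ofReal ((2 / 3) ^ n)) Filter.atTop (nhds 0) := by
    simpa using ENNReal.tendsto_ofReal (tendsto_pow_atTop_nhds_zero_of_lt_one
      (by norm_num : (0 : ℝ) ≤ 2 / 3) (by norm_num))
  exact nonpos_iff_eq_zero.1 (ge_of_tendsto' hlim fun n ↦
    (measure_mono (iInter_subset _ n)).trans (volume_preCantorSet_le n))

lemma unitInterval.exists_volume_eq_zero_mk_eq :
    ∃ C : Set unitInterval, volume C = 0 ∧ #C = #unitInterval := by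
  refine ⟨Subtype.val ⁻¹' cantorSet, ?_, ?_⟩
  · rw [unitInterval.volume_apply]
    exact measure_mono_null (image_preimage_subset _ _) volume_cantorSet
  · have hsub : cantorSet ⊆ range ((↑) : unitInterval → ℝ) := by
      rw [Subtype.range_coe]
      exact cantorSet_subset_unitInterval
    rw [mk_preimage_of_injective_of_subset_range _ _ Subtype.val_injective hsub,
      mk_congr cantorSetEquivNatToBool, unitInterval, mk_Icc_real zero_lt_one]
    simp

theorem exists_equiv_eqOn_of_mk_compl_eq {α β : Type u} {f : α → β} {s : Set α} {t : Set β}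
    (hf : BijOn f s t) (hc : #(sᶜ : Set α) = #(tᶜ : Set β)) : ∃ e : α ≃ β, EqOn e f s := by
  classical
  obtain ⟨ec⟩ := Cardinal.eq.1 hc
  refine ⟨(Equiv.Set.sumCompl s).symm.trans (((hf.equiv f).sumCongr ec).trans
    (Equiv.Set.sumCompl t)), fun x hx ↦ ?_⟩
  simp only [Equiv.trans_apply, Equiv.Set.sumCompl_symm_apply_of_mem hx, Equiv.sumCongr_apply,
    Sum.map_inl, Equiv.Set.sumCompl_apply_inl]
  rfl

theorem exists_equiv_ae_eq_of_bijOn {α : Type*} [MeasurableSpace α] {μ : Measure α}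
    {f g : α → α} {s t C : Set α} (hf : BijOn f s t) (hinv : InvOn g f s t)
    (hs : μ sᶜ = 0) (ht : μ tᶜ = 0) (hC : μ C = 0) (hCmk : #C = #α)
    (hfC : μ (f ⁻¹' C) = 0) (hgC : μ (g ⁻¹' C) = 0) :
    ∃ e : α ≃ α, e =ᵐ[μ] f ∧ e.symm =ᵐ[μ] g := by
  set s' := s \ (C ∪ f ⁻¹' C)
  have hf' : BijOn f s' (f '' s') := (hf.injOn.mono sdiff_subset).bijOn_image
  have mk_compl_eq {u : Set α} (hu : C ⊆ uᶜ) : #(uᶜ : Set α) = #α :=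
    le_antisymm (mk_set_le _) (hCmk ▸ mk_le_mk_of_subset hu)
  have hCs' : C ⊆ s'ᶜ := fun x hx hxs ↦ hxs.2 (Or.inl hx)
  have hCt' : C ⊆ (f '' s')ᶜ := by
    rintro _ hx ⟨y, hy, rfl⟩
    exact hy.2 (Or.inr hx)
  obtain ⟨e, he⟩ :=
    exists_equiv_eqOn_of_mk_compl_eq hf' (by rw [mk_compl_eq hCs', mk_compl_eq hCt'])
  have hs' : μ s'ᶜ = 0 := by
    refine measure_mono_null (fun x hx ↦ ?_) (measure_union_null hs (measure_union_null hC hfC))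
    by_contra! h
    simp only [mem_union, mem_compl_iff, mem_preimage, not_or, not_not] at h
    exact hx ⟨h.1, not_or.2 h.2⟩
  have ht' : μ (f '' s')ᶜ = 0 := by
    refine measure_mono_null (fun y hy ↦ ?_) (measure_union_null ht (measure_union_null hC hgC))
    by_contra! h
    simp only [mem_union, mem_compl_iff, mem_preimage, not_or, not_not] at h
    obtain ⟨hyt, hyC, hgyC⟩ := h
    refine hy ⟨g y, ⟨(hf.symm hinv.symm).mapsTo hyt, ?_⟩, hinv.2 hyt⟩
    rw [mem_union, mem_preimage, hinv.2 hyt]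
    exact not_or.2 ⟨hgyC, hyC⟩
  refine ⟨e, Filter.mem_of_superset (mem_ae_iff.2 hs') fun x hx ↦ he hx,
    Filter.mem_of_superset (mem_ae_iff.2 ht') ?_⟩
  rintro _ ⟨x, hx, rfl⟩
  rw [mem_ofPred_eq, Equiv.symm_apply_eq, hinv.1 hx.1, he hx]

theorem aemeasurable_and_map_eq_of_Iic {α β : Type*} [MeasurableSpace α] [TopologicalSpace β]
    [MeasurableSpace β] [BorelSpace β] [LinearOrder β] [OrderTopology β] [SecondCountableTopology β]
    {μ : Measure α} {ν : Measure β} [IsFiniteMeasure ν] {f : α → β}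
    (hmeas : ∀ b, NullMeasurableSet (f ⁻¹' Iic b) μ) (hvol : ∀ b, μ (f ⁻¹' Iic b) = ν (Iic b)) :
    AEMeasurable f μ ∧ μ.map f = ν := by
  have hf : AEMeasurable f μ := NullMeasurable.aemeasurable
    (measurable_of_Iic (mδ := NullMeasurableSpace.instMeasurableSpace) hmeas)
  exact ⟨hf, (Measure.ext_of_Iic ν _ fun b ↦ by
    rw [Measure.map_apply₀ hf measurableSet_Iic.nullMeasurableSet, hvol]).symm⟩

lemma mPhi_of_map_eq {φ : I01 → I01} (hφ : AEMeasurable φ volume) (hmap : volume.map φ = volume) :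
    MPhi φ :=
  ⟨hφ, fun A hA ↦ by rw [← Measure.map_apply₀ hφ (by rwa [hmap]), hmap]⟩

lemma MPhi.congr_ae {φ ψ : I01 → I01} (hψ : MPhi ψ) (h : φ =ᵐ[volume] ψ) : MPhi φ :=
  ⟨hψ.1.congr h.symm, fun A hA ↦ (measure_congr (h.preimage A)).trans (hψ.2 A hA)⟩

lemma mPhi_of_inter_preimage_ordConnected {X : Set I01} {f : I01 → I01} (hX : volume Xᶜ = 0)
    (h : ∀ J : Set I01, ((fun x : I01 => (x : ℝ)) '' J).OrdConnected →
      NullMeasurableSet (X ∩ f ⁻¹' J) volume ∧ volume (X ∩ f ⁻¹' J) = volume J) :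
    MPhi f := by
  have hae (b : I01) : (X ∩ f ⁻¹' Iic b : Set I01) =ᵐ[volume] f ⁻¹' Iic b :=
    inter_ae_eq_right_of_ae_eq_univ (ae_eq_univ.2 hX)
  have hIic (b : I01) := h (Iic b) (by rw [image_subtype_val_Icc_Iic]; exact ordConnected_Icc)
  obtain ⟨hf, hmap⟩ := aemeasurable_and_map_eq_of_Iic (fun b ↦ (hIic b).1.congr (hae b))
    fun b ↦ (measure_congr (hae b)).symm.trans (hIic b).2
  exact mPhi_of_map_eq hf hmap

/-- A bijection between full-measure subsets of `[0,1]` that is measure preserving on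
intervals agrees almost everywhere with an element of `Φ₀`. -/
theorem exists_mPhi0_ae_eq (X Y : Set I01)
    (hXm : NullMeasurableSet X volume) (hYm : NullMeasurableSet Y volume)
    (hX : volume X = 1) (hY : volume Y = 1)
    (ψ : I01 → I01) (hbij : Set.BijOn ψ X Y)
    (hmp : ∀ J : Set I01, ((fun x : I01 => (x : ℝ)) '' J).OrdConnected →
      NullMeasurableSet (ψ '' (J ∩ X)) volume ∧
      NullMeasurableSet (X ∩ ψ ⁻¹' (J ∩ Y)) volume ∧
      volume (ψ '' (J ∩ X)) = volume J ∧
      volume (X ∩ ψ ⁻¹' (J ∩ Y)) = volume J) :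
    ∃ φ : I01 → I01, MPhi0 φ ∧ φ =ᵐ[volume] ψ := by
  set χ := Function.invFunOn ψ X
  have hinv : InvOn χ ψ X Y := hbij.invOn_invFunOn
  have hXc : volume Xᶜ = 0 := (prob_compl_eq_zero_iff₀ hXm).2 hX
  have hYc : volume Yᶜ = 0 := (prob_compl_eq_zero_iff₀ hYm).2 hY
  have hpre (J : Set I01) : X ∩ ψ ⁻¹' (J ∩ Y) = X ∩ ψ ⁻¹' J := by
    rw [preimage_inter, ← inter_assoc]
    exact inter_eq_left.2 fun x hx ↦ hbij.mapsTo hx.1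
  have himg (J : Set I01) : ψ '' (J ∩ X) = Y ∩ χ ⁻¹' J := by
    rw [hinv.1.image_inter', hbij.image_eq, inter_comm]
  have hψ : MPhi ψ := mPhi_of_inter_preimage_ordConnected hXc fun J hJ ↦ by
    simpa only [hpre] using And.intro (hmp J hJ).2.1 (hmp J hJ).2.2.2
  have hχ : MPhi χ := mPhi_of_inter_preimage_ordConnected hYc fun J hJ ↦ by
    simpa only [himg] using And.intro (hmp J hJ).1 (hmp J hJ).2.2.1
  obtain ⟨C, hC, hCmk⟩ := unitInterval.exists_volume_eq_zero_mk_eq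
  obtain ⟨e, heψ, heχ⟩ := exists_equiv_ae_eq_of_bijOn hbij hinv hXc hYc hC hCmk
    ((hψ.2 C (.of_null hC)).trans hC) ((hχ.2 C (.of_null hC)).trans hC)
  refine ⟨e, ⟨e.bijective, hψ.congr_ae heψ, ?_⟩, heψ⟩
  rw [Function.invFun_eq_of_injective_of_rightInverse e.injective e.right_inv]
  exact hχ.congr_ae heχ
end
end

section
/- Let U, W be graphons with δ_□(U,W) = 0. Then δ₁(U,W) = 0. -/
open MeasureTheory Set
open scoped symmDiff

noncomputable section

/-!
Choose `φ` with `‖U - W^φ‖_□` tiny. Approximate `U` and `W` in `L¹` by step functions `Uₛ`, `Wₛ`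
on fixed grids. The step function `Uₛ - Wₛ^φ` is constant on the rectangles of a partition of
`I²` into a number of cells that does not depend on `φ`, and on each such rectangle its `L¹`
mass is the absolute value of its integral, which the cut norm of `U - W^φ` controls up to the
local approximation errors. Summing over the cells,
`‖U - W^φ‖₁ ≤ 2 (‖U - Uₛ‖₁ + ‖W - Wₛ‖₁) + (number of cells) · ‖U - W^φ‖_□`.
-/

namespace MeasureTheory

lemma integrable_comp_of_finite {α ι : Type*} [MeasurableSpace α] {μ : Measure α}
    [IsFiniteMeasure μ] [Finite ι] [MeasurableSpace ι] [MeasurableSingletonClass ι]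
    {K : α → ι} (hK : Measurable K) (g : ι → ℝ) : Integrable (fun x => g (K x)) μ := by
  obtain ⟨C, hC⟩ := (Set.finite_range fun i => ‖g i‖).bddAbove
  exact .of_bound ((measurable_of_finite g).comp hK).aestronglyMeasurable C
    (.of_forall fun x => hC ⟨K x, rfl⟩)

lemma integral_eq_sum_setIntegral_fiber {α ι : Type*} [MeasurableSpace α] {μ : Measure α}
    [Fintype ι] [MeasurableSpace ι] [MeasurableSingletonClass ι] {K : α → ι}
    (hK : Measurable K) {F : α → ℝ} (hF : Integrable F μ) :
    ∫ x, F x ∂μ = ∑ c, ∫ x in K ⁻¹' {c}, F x ∂μ := by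
  rw [← integral_iUnion_fintype (fun c => hK (measurableSet_singleton c))
    (pairwise_disjoint_fiber K) fun _ => hF.integrableOn, ← preimage_iUnion,
    iUnion_of_singleton, preimage_univ, setIntegral_univ]

lemma MeasurePreserving.integral_comp_of_aestronglyMeasurable {α β : Type*} [MeasurableSpace α]
    [MeasurableSpace β] {μ : Measure α} {ν : Measure β} {f : α → β}
    (hf : MeasurePreserving f μ ν) {g : β → ℝ} (hg : AEStronglyMeasurable g ν) :
    ∫ x, g (f x) ∂μ = ∫ y, g y ∂ν := by
  rw [← hf.map_eq] at hg ⊢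
  exact (integral_map hf.measurable.aemeasurable hg).symm

end MeasureTheory

lemma IsGraphon.integrable {W : I01 × I01 → ℝ} (hW : IsGraphon W) : Integrable W :=
  let ⟨_, ⟨C, hC⟩, hm⟩ := hW
  .of_bound hm.aestronglyMeasurable C (.of_forall hC)

lemma cutNorm_nonneg (V : I01 × I01 → ℝ) : 0 ≤ cutNorm V :=
  Real.sSup_nonneg fun _ ⟨_, _, _, _, hr⟩ => hr ▸ abs_nonneg _

lemma abs_setIntegral_prod_le_cutNorm {V : I01 × I01 → ℝ} (hV : Integrable V) {S T : Set I01}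
    (hS : NullMeasurableSet S) (hT : NullMeasurableSet T) :
    |∫ p in S ×ˢ T, V p| ≤ cutNorm V := by
  refine le_csSup ⟨∫ p, |V p|, ?_⟩ ⟨S, T, hS, hT, rfl⟩
  rintro r ⟨S', T', -, -, rfl⟩
  calc |∫ p in S' ×ˢ T', V p| ≤ ∫ p in S' ×ˢ T', |V p| := abs_integral_le_integral_abs
    _ ≤ ∫ p, |V p| := setIntegral_le_integral hV.abs (.of_forall fun _ => abs_nonneg _)

lemma l1Norm_nonneg (V : I01 × I01 → ℝ) : 0 ≤ l1Norm V :=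
  integral_nonneg fun _ => abs_nonneg _

lemma mPhi0_id : MPhi0 (id : I01 → I01) := by
  have hid : MPhi (id : I01 → I01) := ⟨aemeasurable_id, fun _ _ => rfl⟩
  refine ⟨Function.bijective_id, hid, ?_⟩
  rwa [show Function.invFun (id : I01 → I01) = id from
    funext (Function.leftInverse_invFun Function.injective_id)]

lemma MPhi.exists_measurePreserving_ae_eq {φ : I01 → I01} (hφ : MPhi φ) :
    ∃ ψ, MeasurePreserving ψ volume volume ∧ φ =ᵐ[volume] ψ := by
  obtain ⟨hm, hpres⟩ := hφ
  refine ⟨hm.mk φ, ⟨hm.measurable_mk, ?_⟩, hm.ae_eq_mk⟩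
  ext A hA
  rw [Measure.map_apply hm.measurable_mk hA, ← hpres A hA.nullMeasurableSet]
  exact measure_congr (hm.ae_eq_mk.preimage A).symm

lemma compMap_ae_congr (W : I01 × I01 → ℝ) {φ ψ : I01 → I01} (h : φ =ᵐ[volume] ψ) :
    compMap W φ =ᵐ[volume] compMap W ψ := by
  have h1 := (Measure.quasiMeasurePreserving_fst (μ := (volume : Measure I01))
    (ν := (volume : Measure I01))).ae_eq_comp h
  have h2 := (Measure.quasiMeasurePreserving_snd (μ := (volume : Measure I01))
    (ν := (volume : Measure I01))).ae_eq_comp h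
  rw [← Measure.volume_eq_prod] at h1 h2
  filter_upwards [h1, h2] with p hp1 hp2
  simp only [compMap, Function.comp_apply] at hp1 hp2 ⊢
  rw [hp1, hp2]

def gridIndex (n : ℕ) (x : I01) : Fin (n + 1) :=
  ⟨⌊(x : ℝ) * n⌋₊, Nat.lt_succ_of_le <| Nat.floor_le_of_le <|
    mul_le_of_le_one_left n.cast_nonneg x.2.2⟩

def gridPoint (n : ℕ) (i : Fin (n + 1)) : I01 :=
  ⟨i / n, by positivity, div_le_one_of_le₀ (by exact_mod_cast i.is_le) n.cast_nonneg⟩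

lemma measurable_gridIndex (n : ℕ) : Measurable (gridIndex n) := by
  refine measurable_to_countable' fun i => ?_
  have hfloor : Measurable fun x : I01 => ⌊(x : ℝ) * n⌋₊ :=
    (measurable_subtype_coe.mul_const _).nat_floor
  convert hfloor (measurableSet_singleton (i : ℕ)) using 1
  ext x
  simp [gridIndex, Fin.ext_iff]

lemma dist_gridPoint_gridIndex_le {n : ℕ} (hn : 0 < n) (x : I01) :
    dist x (gridPoint n (gridIndex n x)) ≤ 1 / n := by
  have hn' : (0 : ℝ) < n := by exact_mod_cast hn
  have hx : (0 : ℝ) ≤ x * n := mul_nonneg x.2.1 hn'.le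
  rw [Subtype.dist_eq, Real.dist_eq]
  simp only [gridPoint, gridIndex]
  rw [show (x : ℝ) - ⌊(x : ℝ) * n⌋₊ / n = ((x : ℝ) * n - ⌊(x : ℝ) * n⌋₊) / n by
    field_simp, abs_div, abs_of_pos hn']
  gcongr
  rw [abs_le]
  constructor <;> linarith [Nat.lt_floor_add_one ((x : ℝ) * n), Nat.floor_le hx]

lemma MeasureTheory.Integrable.exists_integral_abs_sub_grid_le {F : I01 × I01 → ℝ}
    (hF : Integrable F) {δ : ℝ} (hδ : 0 < δ) :
    ∃ n, ∃ u : Fin (n + 1) → Fin (n + 1) → ℝ,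
      ∫ p, |F p - u (gridIndex n p.1) (gridIndex n p.2)| ≤ δ := by
  obtain ⟨f, -, hFf, hf, -⟩ := hF.exists_hasCompactSupport_integral_sub_le (half_pos hδ)
  obtain ⟨r, hr, hfr⟩ := Metric.uniformContinuous_iff.mp
    (CompactSpace.uniformContinuous_of_continuous hf) _ (half_pos hδ)
  obtain ⟨n, hn⟩ := exists_nat_one_div_lt hr
  set g : I01 → I01 := fun x => gridPoint (n + 1) (gridIndex (n + 1) x)
  have hg : ∀ x, dist x (g x) < r := fun x =>
    (dist_gridPoint_gridIndex_le n.succ_pos x).trans_lt (by exact_mod_cast hn)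
  have hfg : ∀ p, |f p - f (g p.1, g p.2)| ≤ δ / 2 := fun p =>
    (hfr (show dist p (g p.1, g p.2) < r from
      Prod.dist_eq (x := p) ▸ max_lt (hg p.1) (hg p.2))).le
  have hstep : Integrable (fun p : I01 × I01 => f (g p.1, g p.2)) :=
    integrable_comp_of_finite
      ((measurable_gridIndex _).prodMap (measurable_gridIndex _))
      (fun c => f (gridPoint (n + 1) c.1, gridPoint (n + 1) c.2))
  have hFf' : Integrable fun p => |F p - f p| :=
    (hF.sub (hf.integrable_of_hasCompactSupport (HasCompactSupport.of_compactSpace f))).abs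
  refine ⟨n + 1, fun i j => f (gridPoint (n + 1) i, gridPoint (n + 1) j), ?_⟩
  calc ∫ p, |F p - f (g p.1, g p.2)|
      ≤ ∫ p, (|F p - f p| + δ / 2) :=
        integral_mono (hF.sub hstep).abs (hFf'.add (integrable_const _)) fun p =>
          (abs_sub_le _ (f p) _).trans (add_le_add_right (hfg p) _)
    _ ≤ δ := by
        rw [integral_add hFf' (integrable_const _), integral_const, probReal_univ, one_smul]
        simp only [Real.norm_eq_abs] at hFf
        linarith

lemma integral_abs_cellwise_le {ι : Type*} [Fintype ι] [MeasurableSpace ι]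
    [MeasurableSingletonClass ι] {κ : I01 → ι} (hκ : Measurable κ) (d : ι → ι → ℝ)
    {V : I01 × I01 → ℝ} (hV : Integrable V) :
    ∫ p : I01 × I01, |d (κ p.1) (κ p.2)| ≤
      (∫ p : I01 × I01, |d (κ p.1) (κ p.2) - V p|) + Fintype.card ι ^ 2 * cutNorm V := by
  set D : I01 × I01 → ℝ := fun p => d (κ p.1) (κ p.2)
  set K : I01 × I01 → ι × ι := Prod.map κ κ
  have hK : Measurable K := hκ.prodMap hκ
  have hD : Integrable D := integrable_comp_of_finite hK fun c => d c.1 c.2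
  have hcell : ∀ c,
      ∫ p in K ⁻¹' {c}, |D p| ≤ (∫ p in K ⁻¹' {c}, |D p - V p|) + cutNorm V := by
    intro c
    have hs : MeasurableSet (K ⁻¹' {c}) := hK (measurableSet_singleton c)
    have hconst : ∀ p ∈ K ⁻¹' {c}, D p = d c.1 c.2 := by
      rintro p rfl
      rfl
    have hprod : K ⁻¹' {c} = (κ ⁻¹' {c.1}) ×ˢ (κ ⁻¹' {c.2}) := by
      ext p
      simp [K, Prod.ext_iff]
    calc ∫ p in K ⁻¹' {c}, |D p|
        = |∫ p in K ⁻¹' {c}, D p| := by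
          rw [setIntegral_congr_fun hs hconst,
            setIntegral_congr_fun hs fun p hp => congrArg abs (hconst p hp),
            setIntegral_const, setIntegral_const, smul_eq_mul, smul_eq_mul, abs_mul,
            abs_of_nonneg measureReal_nonneg]
      _ = |(∫ p in K ⁻¹' {c}, (D p - V p)) + ∫ p in K ⁻¹' {c}, V p| := by
          rw [← integral_add (f := fun p => D p - V p) (hD.sub hV).integrableOn hV.integrableOn]
          simp
      _ ≤ (∫ p in K ⁻¹' {c}, |D p - V p|) + cutNorm V := by
          refine (abs_add_le _ _).trans (add_le_add abs_integral_le_integral_abs ?_)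
          rw [hprod]
          exact abs_setIntegral_prod_le_cutNorm hV
            (hκ (measurableSet_singleton _)).nullMeasurableSet
            (hκ (measurableSet_singleton _)).nullMeasurableSet
  calc ∫ p, |D p|
      = ∑ c, ∫ p in K ⁻¹' {c}, |D p| := integral_eq_sum_setIntegral_fiber hK hD.abs
    _ ≤ ∑ c, ((∫ p in K ⁻¹' {c}, |D p - V p|) + cutNorm V) :=
        Finset.sum_le_sum fun c _ => hcell c
    _ = (∫ p, |D p - V p|) + Fintype.card ι ^ 2 * cutNorm V := by
        rw [Finset.sum_add_distrib,
          ← integral_eq_sum_setIntegral_fiber (F := fun p => |D p - V p|) hK (hD.sub hV).abs,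
          Finset.sum_const, Finset.card_univ, Fintype.card_prod, nsmul_eq_mul]
        push_cast
        ring

lemma integral_abs_le_of_cellwise_approx {ι : Type*} [Fintype ι] [MeasurableSpace ι]
    [MeasurableSingletonClass ι] {κ : I01 → ι} (hκ : Measurable κ) (d : ι → ι → ℝ)
    {V : I01 × I01 → ℝ} (hV : Integrable V) :
    ∫ p, |V p| ≤
      2 * (∫ p, |V p - d (κ p.1) (κ p.2)|) + Fintype.card ι ^ 2 * cutNorm V := by
  have hD : Integrable fun p : I01 × I01 => d (κ p.1) (κ p.2) :=
    integrable_comp_of_finite (hκ.prodMap hκ) fun c => d c.1 c.2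
  have hcell := integral_abs_cellwise_le hκ d hV
  simp only [abs_sub_comm (d _ _)] at hcell
  calc ∫ p, |V p| ≤ ∫ p : I01 × I01, (|V p - d (κ p.1) (κ p.2)| + |d (κ p.1) (κ p.2)|) :=
        integral_mono hV.abs ((hV.sub hD).abs.add hD.abs) fun p => by
          simpa using abs_add_le (V p - d (κ p.1) (κ p.2)) (d (κ p.1) (κ p.2))
    _ = (∫ p, |V p - d (κ p.1) (κ p.2)|) + ∫ p : I01 × I01, |d (κ p.1) (κ p.2)| :=
        integral_add (hV.sub hD).abs hD.abs
    _ ≤ _ := by linarith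

lemma exists_l1Norm_le_add_mul_cutNorm {U W : I01 × I01 → ℝ} (hU : Integrable U)
    (hW : Integrable W) {δ : ℝ} (hδ : 0 < δ) :
    ∃ N : ℕ, ∀ φ, MPhi φ → l1Norm (fun p => U p - compMap W φ p) ≤
      δ + N * cutNorm (fun p => U p - compMap W φ p) := by
  obtain ⟨n, u, hu⟩ := hU.exists_integral_abs_sub_grid_le (half_pos (half_pos hδ))
  obtain ⟨m, w, hw⟩ := hW.exists_integral_abs_sub_grid_le (half_pos (half_pos hδ))
  refine ⟨Fintype.card (Fin (n + 1) × Fin (m + 1)) ^ 2, fun φ hφ => ?_⟩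
  obtain ⟨ψ, hψ, hφψ⟩ := hφ.exists_measurePreserving_ae_eq
  set T : I01 × I01 → I01 × I01 := Prod.map ψ ψ
  have hT : MeasurePreserving T volume volume := by
    simpa only [← Measure.volume_eq_prod] using hψ.prod hψ
  have hWφ : compMap W φ =ᵐ[volume] fun p => W (T p) := compMap_ae_congr W hφψ
  set V : I01 × I01 → ℝ := fun p => U p - compMap W φ p
  -- both step functions below are constant on the rectangles of the partition by `κ`
  set κ : I01 → Fin (n + 1) × Fin (m + 1) := fun x => (gridIndex n x, gridIndex m (ψ x))
  have hκ : Measurable κ :=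
    (measurable_gridIndex n).prodMk ((measurable_gridIndex m).comp hψ.measurable)
  set Us : I01 × I01 → ℝ := fun p => u (gridIndex n p.1) (gridIndex n p.2)
  set Ws : I01 × I01 → ℝ := fun q => w (gridIndex m q.1) (gridIndex m q.2)
  have hUs : Integrable Us := integrable_comp_of_finite
    ((measurable_gridIndex n).prodMap (measurable_gridIndex n)) fun c => u c.1 c.2
  have hWs : Integrable Ws := integrable_comp_of_finite
    ((measurable_gridIndex m).prodMap (measurable_gridIndex m)) fun c => w c.1 c.2
  have hWsT : ∫ p, |W (T p) - Ws (T p)| = ∫ q, |W q - Ws q| :=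
    hT.integral_comp_of_aestronglyMeasurable (hW.sub hWs).abs.aestronglyMeasurable
  have hV : Integrable V := hU.sub ((hT.integrable_comp_of_integrable hW).congr hWφ.symm)
  have hVD : ∫ p, |V p - (Us p - Ws (T p))| ≤ δ / 2 := calc
    ∫ p, |V p - (Us p - Ws (T p))| ≤ ∫ p, (|U p - Us p| + |W (T p) - Ws (T p)|) := by
      refine integral_mono_of_nonneg (.of_forall fun _ => abs_nonneg _)
        ((hU.sub hUs).abs.add ((hT.integrable_comp_of_integrable (hW.sub hWs)).abs)) ?_
      filter_upwards [hWφ] with p hp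
      calc |V p - (Us p - Ws (T p))| = |(U p - Us p) - (W (T p) - Ws (T p))| := by
            simp only [V, hp]
            ring_nf
        _ ≤ _ := abs_sub _ _
    _ ≤ δ / 2 := by
      rw [integral_add (f := fun p => |U p - Us p|) (g := fun p => |W (T p) - Ws (T p)|)
        (hU.sub hUs).abs (hT.integrable_comp_of_integrable (hW.sub hWs)).abs, hWsT]
      linarith
  calc l1Norm V ≤ 2 * (∫ p, |V p - (Us p - Ws (T p))|) +
        Fintype.card (Fin (n + 1) × Fin (m + 1)) ^ 2 * cutNorm V :=
        integral_abs_le_of_cellwise_approx hκ (fun c c' => u c.1 c'.1 - w c.2 c'.2) hV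
    _ ≤ _ := by push_cast; gcongr; linarith

lemma exists_cutNorm_lt_of_gDeltaBox_eq_zero {U W : I01 × I01 → ℝ} (h : gDeltaBox U W = 0)
    {η : ℝ} (hη : 0 < η) :
    ∃ φ, MPhi0 φ ∧ cutNorm (fun p => U p - compMap W φ p) < η := by
  obtain ⟨_, ⟨φ, hφ, rfl⟩, hlt⟩ :=
    exists_lt_of_csInf_lt (by exact ⟨_, id, mPhi0_id, rfl⟩)
      (show gDeltaBox U W < η from h ▸ hη)
  exact ⟨φ, hφ, hlt⟩

lemma gDelta1_eq_zero_of_forall_exists_l1Norm_lt {U W : I01 × I01 → ℝ}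
    (h : ∀ ε > 0, ∃ φ, MPhi0 φ ∧ l1Norm (fun p => U p - compMap W φ p) < ε) :
    gDelta1 U W = 0 := by
  have hbdd : BddBelow {r | ∃ φ, MPhi0 φ ∧ r = l1Norm (fun p => U p - compMap W φ p)} :=
    ⟨0, fun _ ⟨_, _, hr⟩ => hr ▸ l1Norm_nonneg _⟩
  refine le_antisymm (le_of_forall_pos_lt_add fun ε hε => ?_)
    (le_csInf ⟨_, id, mPhi0_id, rfl⟩ fun _ ⟨_, _, hr⟩ => hr ▸ l1Norm_nonneg _)
  obtain ⟨φ, hφ, hlt⟩ := h ε hε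
  exact (csInf_le hbdd ⟨φ, hφ, rfl⟩).trans_lt (by simpa using hlt)

/-- Graphons at cut distance zero are at `δ₁`-distance zero. -/
theorem gDelta1_eq_zero_of_gDeltaBox_eq_zero (U W : I01 × I01 → ℝ)
    (hU : IsGraphon U) (hW : IsGraphon W) (h : gDeltaBox U W = 0) :
    gDelta1 U W = 0 := by
  refine gDelta1_eq_zero_of_forall_exists_l1Norm_lt fun ε hε => ?_
  obtain ⟨N, hN⟩ := exists_l1Norm_le_add_mul_cutNorm hU.integrable hW.integrable (half_pos hε)
  obtain ⟨φ, hφ, hcut⟩ :=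
    exists_cutNorm_lt_of_gDeltaBox_eq_zero h (η := ε / 2 / (N + 1)) (by positivity)
  refine ⟨φ, hφ, (hN φ hφ.2.1).trans_lt ?_⟩
  have hc := cutNorm_nonneg (fun p => U p - compMap W φ p)
  calc ε / 2 + N * cutNorm (fun p => U p - compMap W φ p)
      ≤ ε / 2 + (N + 1) * cutNorm (fun p => U p - compMap W φ p) := by gcongr; linarith
    _ < ε / 2 + (N + 1) * (ε / 2 / (N + 1)) := by gcongr
    _ = ε := by field_simp; ring

end
end

section
/- For every graphon W with values in [0,1] there is a graphon U with values in [0,1] such that W = U almost everywhere and, for every finite simple graph F, either t(F,U) > 0 or U is F-free. -/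
open MeasureTheory Set
open scoped symmDiff

noncomputable section

/-- A `[0,1]`-valued graphon `U` is `F`-free if every tuple of points misses some edge. -/
def GraphonFree {k : ℕ} (F : SimpleGraph (Fin k)) (U : I01 × I01 → ℝ) : Prop :=
  ∀ x : Fin k → I01, ∃ i j : Fin k, F.Adj i j ∧ U (x i, x j) = 0

/-!
Replace `W` by a measurable symmetric version `W₀` and view the support of `W₀` as a subset `T`
of `ℝ²`. By the Lebesgue density theorem almost every point of `T` is a density point of `T`;
discarding the exceptional null set together with its mirror image leaves a symmetric set `S`
each of whose points is a density point of `S`, and `U` is `W₀` cut down to `S`.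
If `U (xᵢ, xⱼ) ≠ 0` on every edge of `F`, then for small `δ` the square of side `2δ` around
each `(xᵢ, xⱼ)` is almost filled by `S`, and a union bound over the edges shows that a positive
proportion of the tuples in the `δ`-box around `x` have all their edges in `S`; hence
`t(F, U) > 0`.
-/

open Filter Topology Metric
open scoped ENNReal

section DensityPoint

variable {β : Type*} [PseudoMetricSpace β] [MeasurableSpace β] {μ : Measure β} {s t : Set β}
  {x : β}

def IsDensityPoint (μ : Measure β) (s : Set β) (x : β) : Prop :=
  Tendsto (fun r => μ (s ∩ closedBall x r) / μ (closedBall x r)) (𝓝[>] 0) (𝓝 1)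

theorem IsDensityPoint.congr_ae (h : IsDensityPoint μ s x) (hst : s =ᵐ[μ] t) :
    IsDensityPoint μ t x :=
  h.congr fun r => by rw [measure_congr (hst.inter (ae_eq_refl (closedBall x r)))]

theorem IsDensityPoint.eventually_measure_closedBall_diff_le [ProperSpace β]
    [IsFiniteMeasureOnCompacts μ] (h : IsDensityPoint μ s x) (hs : MeasurableSet s)
    {η : ℝ≥0∞} (hη : η ≠ 0) :
    ∀ᶠ r in 𝓝[>] 0, μ (closedBall x r \ s) ≤ η * μ (closedBall x r) := by
  filter_upwards [h.eventually (eventually_gt_nhds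
    (ENNReal.sub_lt_self ENNReal.one_ne_top one_ne_zero hη))] with r hr
  set B := closedBall x r
  have hlarge : (1 - η) * μ B ≤ μ (B ∩ s) := by
    rw [inter_comm]; exact (ENNReal.mul_lt_of_lt_div hr).le
  have hfin : μ (B ∩ s) ≠ ∞ :=
    ((measure_mono inter_subset_left).trans_lt measure_closedBall_lt_top).ne
  rw [ENNReal.eq_sub_of_add_eq hfin (measure_sdiff_add_inter B hs), tsub_le_iff_right]
  calc μ B ≤ (η + (1 - η)) * μ B := le_mul_of_one_le_left' le_add_tsub
    _ ≤ η * μ B + μ (B ∩ s) := by rw [add_mul]; gcongr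

end DensityPoint

theorem exists_subset_invariant_forall_isDensityPoint {β : Type*} [MetricSpace β]
    [MeasurableSpace β] [SecondCountableTopology β] [BorelSpace β] [HasBesicovitchCovering β]
    (μ : Measure β) [IsLocallyFiniteMeasure μ]
    {T : Set β} (hT : MeasurableSet T) {σ : β → β} (hσ : Function.Involutive σ)
    (hσμ : Measure.QuasiMeasurePreserving σ μ μ) (hTσ : σ ⁻¹' T = T) :
    ∃ S ⊆ T, MeasurableSet S ∧ σ ⁻¹' S = S ∧ S =ᵐ[μ] T ∧
      ∀ x ∈ S, IsDensityPoint μ S x := by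
  set N : Set β := toMeasurable μ (T \ {x | IsDensityPoint μ T x})
  have hNm : MeasurableSet N := measurableSet_toMeasurable _ _
  have hN : μ N = 0 := by
    rw [measure_toMeasurable, ← ae_iff.mp ((ae_restrict_iff' hT).mp
      (Besicovitch.ae_tendsto_measure_inter_div μ T))]
    congr 1
    ext x
    simp [IsDensityPoint]
  have hNN : μ (N ∪ σ ⁻¹' N) = 0 := measure_union_null hN (hσμ.preimage_null hN)
  have hST : (T \ (N ∪ σ ⁻¹' N) : Set β) =ᵐ[μ] T := sdiff_null_ae_eq_self hNN
  refine ⟨T \ (N ∪ σ ⁻¹' N), sdiff_subset, hT.diff (hNm.union (hσμ.measurable hNm)), ?_,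
    hST, fun x hx => ?_⟩
  · rw [preimage_sdiff, preimage_union, hTσ, ← preimage_comp, hσ.comp_self, preimage_id,
      union_comm]
  · refine IsDensityPoint.congr_ae ?_ hST.symm
    by_contra hxT
    exact hx.2 (Or.inl (subset_toMeasurable _ _ ⟨hx.1, hxT⟩))

section PairMarginal

variable {α ι : Type*} [MeasurableSpace α] {μ : Measure α} [SigmaFinite μ] [Fintype ι]

theorem measurePreserving_eval_pair {i j : ι} (hij : i ≠ j) (hcover : ∀ l, l = i ∨ l = j) :
    MeasurePreserving (fun y : ι → α => (y i, y j)) (Measure.pi fun _ => μ) (μ.prod μ) := by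
  classical
  refine ⟨by fun_prop, (Measure.prod_eq fun s t hs ht => ?_).symm⟩
  have hpre : (fun y : ι → α => (y i, y j)) ⁻¹' (s ×ˢ t) =
      Set.pi univ (fun l => if l = i then s else t) := by
    ext y
    simp only [mem_preimage, mem_prod, Set.mem_pi, mem_univ, true_implies]
    refine ⟨fun ⟨hi, hj⟩ l => ?_, fun h => ⟨by simpa using h i, by simpa [hij.symm] using h j⟩⟩
    rcases hcover l with rfl | rfl
    · simpa using hi
    · simpa [hij.symm] using hj
  have huniv : (Finset.univ : Finset ι) = {i, j} := by
    ext l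
    simpa using hcover l
  rw [Measure.map_apply (by fun_prop) (hs.prod ht), hpre, Measure.pi_pi, huniv,
    Finset.prod_pair hij, if_pos rfl, if_neg hij.symm]

theorem measure_pi_setOf_pair_mem [DecidableEq ι] {i j : ι} (hij : i ≠ j) {C : Set (α × α)}
    (hC : MeasurableSet C) {B : ι → Set α} (hB : ∀ l, MeasurableSet (B l)) :
    Measure.pi (fun _ => μ) {y | (y i, y j) ∈ C ∧ ∀ l, l ≠ i → l ≠ j → y l ∈ B l} =
      μ.prod μ C * ∏ l ∈ (Finset.univ.erase i).erase j, μ (B l) := by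
  let p : ι → Prop := fun l => l = i ∨ l = j
  let e := MeasurableEquiv.piEquivPiSubtypeProd (fun _ : ι => α) p
  let ii : Subtype p := ⟨i, Or.inl rfl⟩
  let jj : Subtype p := ⟨j, Or.inr rfl⟩
  have hpair : MeasurePreserving (fun y : Subtype p → α => (y ii, y jj))
      (Measure.pi fun _ => μ) (μ.prod μ) :=
    measurePreserving_eval_pair (fun h => hij (congrArg Subtype.val h))
      fun ⟨l, hl⟩ => hl.imp (fun h => Subtype.ext h) (fun h => Subtype.ext h)
  have hset : {y : ι → α | (y i, y j) ∈ C ∧ ∀ l, l ≠ i → l ≠ j → y l ∈ B l} =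
      e ⁻¹' (((fun y : Subtype p → α => (y ii, y jj)) ⁻¹' C) ×ˢ
        Set.pi univ fun l : {l // ¬p l} => B l) := by
    ext y
    simp [e, p, ii, jj, MeasurableEquiv.piEquivPiSubtypeProd, Equiv.piEquivPiSubtypeProd,
      not_or, and_imp]
  have hm : MeasurableSet (((fun y : Subtype p → α => (y ii, y jj)) ⁻¹' C) ×ˢ
      Set.pi univ fun l : {l // ¬p l} => B l) :=
    (hpair.measurable hC).prod (.univ_pi fun l => hB l)
  rw [hset, (measurePreserving_piEquivPiSubtypeProd (fun _ => μ) p).measure_preimage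
      hm.nullMeasurableSet,
    Measure.prod_prod, hpair.measure_preimage hC.nullMeasurableSet, Measure.pi_pi,
    Finset.prod_subtype ((Finset.univ.erase i).erase j) (p := fun l => ¬p l)
      (fun l => by simp [p, and_comm])]

end PairMarginal

section UnionBound

variable {α ι : Type*} [MeasurableSpace α] {μ : Measure α} [Fintype ι]

theorem measure_pi_setOf_forall_pair_mem_pos [SigmaFinite μ] {A : ι → Set α}
    (hA : ∀ l, MeasurableSet (A l)) (hA0 : ∀ l, μ (A l) ≠ 0) (hAtop : ∀ l, μ (A l) ≠ ∞)
    {E : Finset (ι × ι)} (hE : ∀ e ∈ E, e.1 ≠ e.2) {G : Set (α × α)} (hG : MeasurableSet G)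
    {η : ℝ≥0∞} (hη : E.card * η < 1)
    (hbad : ∀ e ∈ E, μ.prod μ ((A e.1 ×ˢ A e.2) \ G) ≤ η * (μ (A e.1) * μ (A e.2))) :
    0 < Measure.pi (fun _ => μ) {y | ∀ e ∈ E, (y e.1, y e.2) ∈ G} := by
  classical
  set ν := Measure.pi fun _ : ι => μ
  set P := ∏ l, μ (A l)
  set Bad : ι × ι → Set (ι → α) := fun e =>
    {y | (y e.1, y e.2) ∈ (A e.1 ×ˢ A e.2) \ G ∧ ∀ l, l ≠ e.1 → l ≠ e.2 → y l ∈ A l}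
  have hBad : ∀ e ∈ E, ν (Bad e) ≤ η * P := by
    intro e he
    have hmem : e.2 ∈ Finset.univ.erase e.1 :=
      Finset.mem_erase.2 ⟨(hE e he).symm, Finset.mem_univ _⟩
    calc ν (Bad e)
        = μ.prod μ ((A e.1 ×ˢ A e.2) \ G) * ∏ l ∈ (Finset.univ.erase e.1).erase e.2, μ (A l) :=
          measure_pi_setOf_pair_mem (hE e he) (((hA _).prod (hA _)).diff hG) hA
      _ ≤ η * (μ (A e.1) * μ (A e.2)) * ∏ l ∈ (Finset.univ.erase e.1).erase e.2, μ (A l) := by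
          gcongr
          exact hbad e he
      _ = η * P := by
          rw [mul_assoc, mul_assoc, Finset.mul_prod_erase _ (fun l => μ (A l)) hmem,
            Finset.mul_prod_erase _ (fun l => μ (A l)) (Finset.mem_univ _)]
  have hcover : Set.pi univ A ⊆ {y | ∀ e ∈ E, (y e.1, y e.2) ∈ G} ∪ ⋃ e ∈ E, Bad e := by
    intro y hy
    by_cases hgood : ∀ e ∈ E, (y e.1, y e.2) ∈ G
    · exact Or.inl hgood
    obtain ⟨e, he, hyG⟩ := not_forall₂.1 hgood
    exact Or.inr (mem_biUnion he ⟨⟨⟨hy _ (mem_univ _), hy _ (mem_univ _)⟩, hyG⟩,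
      fun l _ _ => hy l (mem_univ _)⟩)
  have hP0 : P ≠ 0 := Finset.prod_ne_zero_iff.2 fun l _ => hA0 l
  have hPtop : P ≠ ∞ := ENNReal.prod_ne_top fun l _ => hAtop l
  refine pos_iff_ne_zero.2 fun h0 => (ENNReal.mul_lt_mul_right hP0 hPtop hη).not_ge ?_
  calc P * 1 = ν (Set.pi univ A) := by rw [Measure.pi_pi, mul_one]
    _ ≤ ν ({y | ∀ e ∈ E, (y e.1, y e.2) ∈ G} ∪ ⋃ e ∈ E, Bad e) := measure_mono hcover
    _ ≤ ν (⋃ e ∈ E, Bad e) := by grw [measure_union_le, h0, zero_add]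
    _ ≤ ∑ e ∈ E, ν (Bad e) := measure_biUnion_finset_le E Bad
    _ ≤ ∑ e ∈ E, η * P := Finset.sum_le_sum hBad
    _ = P * (E.card * η) := by rw [Finset.sum_const, nsmul_eq_mul]; ring

theorem integral_prod_pos_of_measure_pos [IsProbabilityMeasure μ] {U : α × α → ℝ}
    (hU : Measurable U) (hU0 : ∀ p, 0 ≤ U p) (hU1 : ∀ p, U p ≤ 1) {E : Finset (ι × ι)}
    {G : Set (α × α)} (hUG : ∀ p ∈ G, 0 < U p)
    (hG : 0 < Measure.pi (fun _ => μ) {y | ∀ e ∈ E, (y e.1, y e.2) ∈ G}) :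
    0 < ∫ y, ∏ e ∈ E, U (y e.1, y e.2) ∂Measure.pi (fun _ => μ) := by
  have hf0 : 0 ≤ fun y : ι → α => ∏ e ∈ E, U (y e.1, y e.2) :=
    fun y => Finset.prod_nonneg fun e _ => hU0 _
  have hfm : Measurable fun y : ι → α => ∏ e ∈ E, U (y e.1, y e.2) :=
    Finset.measurable_prod _ fun e _ => hU.comp (by fun_prop)
  have hfi : Integrable (fun y : ι → α => ∏ e ∈ E, U (y e.1, y e.2)) (Measure.pi fun _ => μ) :=
    .of_bound hfm.aestronglyMeasurable 1 (ae_of_all _ fun y => by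
      rw [Real.norm_of_nonneg (hf0 y)]
      exact Finset.prod_le_one (fun e _ => hU0 _) fun e _ => hU1 _)
  rw [integral_pos_iff_support_of_nonneg hf0 hfi]
  exact hG.trans_le (measure_mono fun y hy => (Finset.prod_pos fun e he => hUG _ (hy e he)).ne')

end UnionBound

-- Density points of subsets of the unit square are taken in `ℝ²`, whose sup-metric balls are
-- the squares `[a - δ, a + δ] × [b - δ, b + δ]`.
local notation "toPlane" => (Prod.map Subtype.val Subtype.val : I01 × I01 → ℝ × ℝ)

theorem measurableEmbedding_toPlane : MeasurableEmbedding toPlane :=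
  unitInterval.measurableEmbedding_coe.prodMap unitInterval.measurableEmbedding_coe

theorem measurePreserving_toPlane :
    MeasurePreserving toPlane volume (volume.restrict (unitInterval ×ˢ unitInterval)) := by
  have h := unitInterval.measurePreserving_coe.prod unitInterval.measurePreserving_coe
  rwa [Measure.prod_restrict] at h

theorem quasiMeasurePreserving_toPlane : Measure.QuasiMeasurePreserving toPlane volume volume :=
  measurePreserving_toPlane.quasiMeasurePreserving.mono_right
    (Measure.absolutelyContinuous_of_le Measure.restrict_le_self)

theorem volume_preimage_toPlane_le {s : Set (ℝ × ℝ)} (hs : MeasurableSet s) :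
    volume (toPlane ⁻¹' s) ≤ volume s := by
  rw [measurePreserving_toPlane.measure_preimage hs.nullMeasurableSet]
  exact Measure.restrict_le_self s

theorem ofReal_le_volume_preimage_closedBall (x : I01) {δ : ℝ} (hδ0 : 0 ≤ δ) (hδ1 : δ ≤ 1) :
    ENNReal.ofReal δ ≤ volume (Subtype.val ⁻¹' closedBall (x : ℝ) δ : Set I01) := by
  rw [unitInterval.measurePreserving_coe.measure_preimage
      measurableSet_closedBall.nullMeasurableSet,
    Measure.restrict_apply measurableSet_closedBall, Real.closedBall_eq_Icc,
    Icc_inter_Icc, Real.volume_Icc]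
  apply ENNReal.ofReal_le_ofReal
  obtain ⟨hx0, hx1⟩ := x.2
  simp only [min_def, max_def]
  split_ifs <;> linarith

theorem volume_closedBall_prod (q : ℝ × ℝ) (δ : ℝ) :
    volume (closedBall q δ) = 4 * (ENNReal.ofReal δ * ENNReal.ofReal δ) := by
  rw [← closedBall_prod_same, Measure.volume_eq_prod, Measure.prod_prod, Real.volume_closedBall,
    Real.volume_closedBall, ENNReal.ofReal_mul zero_le_two, ENNReal.ofReal_ofNat]
  ring

theorem volume_setOf_forall_toPlane_mem_pos {ι : Type*} [Fintype ι]
    {S : Set (ℝ × ℝ)} (hS : MeasurableSet S) {E : Finset (ι × ι)} (hE : ∀ e ∈ E, e.1 ≠ e.2)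
    {x : ι → I01} (hx : ∀ e ∈ E, IsDensityPoint volume S (toPlane (x e.1, x e.2))) :
    0 < volume {y : ι → I01 | ∀ e ∈ E, toPlane (y e.1, y e.2) ∈ S} := by
  -- The factor `4`: the ball of radius `δ` has area `4δ²`, while each `A l` below has measure
  -- at least `δ`.
  obtain ⟨η, hη0, hη⟩ := ENNReal.exists_nnreal_pos_mul_lt (a := 4 * E.card) (b := 1)
    (by finiteness) one_ne_zero
  have hev : ∀ᶠ r in 𝓝[>] (0 : ℝ), r ∈ Ioc 0 1 ∧ ∀ e ∈ E,
      volume (closedBall (toPlane (x e.1, x e.2)) r \ S) ≤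
        η * volume (closedBall (toPlane (x e.1, x e.2)) r) :=
    (eventually_of_mem (Ioo_mem_nhdsGT one_pos) fun r hr => ⟨hr.1, hr.2.le⟩).and <|
      (E.eventually_all).2 fun e he =>
        (hx e he).eventually_measure_closedBall_diff_le hS (by exact_mod_cast hη0.ne')
  obtain ⟨δ, ⟨hδ0, hδ1⟩, hδ⟩ := hev.exists
  set A : ι → Set I01 := fun l => Subtype.val ⁻¹' closedBall (x l : ℝ) δ
  have hA : ∀ l, ENNReal.ofReal δ ≤ volume (A l) :=
    fun l => ofReal_le_volume_preimage_closedBall (x l) hδ0.le hδ1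
  refine measure_pi_setOf_forall_pair_mem_pos (μ := volume) (A := A) (η := 4 * η)
    (fun l => measurable_subtype_coe measurableSet_closedBall)
    (fun l => ((ENNReal.ofReal_pos.2 hδ0).trans_le (hA l)).ne') (fun l => measure_ne_top _ _)
    hE (measurableEmbedding_toPlane.measurable hS) (by convert hη using 1; ring)
    fun e he => ?_
  calc volume.prod volume ((A e.1 ×ˢ A e.2) \ toPlane ⁻¹' S)
      = volume (toPlane ⁻¹' (closedBall (toPlane (x e.1, x e.2)) δ \ S)) := by
        rw [← closedBall_prod_same]; rfl
    _ ≤ volume (closedBall (toPlane (x e.1, x e.2)) δ \ S) :=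
        volume_preimage_toPlane_le (measurableSet_closedBall.diff hS)
    _ ≤ η * volume (closedBall (toPlane (x e.1, x e.2)) δ) := hδ e he
    _ = 4 * η * (ENNReal.ofReal δ * ENNReal.ofReal δ) := by
        rw [volume_closedBall_prod]; ring
    _ ≤ 4 * η * (volume (A e.1) * volume (A e.2)) := by gcongr <;> exact hA _

def IsDensityRegular (U : I01 × I01 → ℝ) : Prop :=
  ∀ p, U p ≠ 0 → IsDensityPoint volume (toPlane '' Function.support U) (toPlane p)

theorem IsDensityRegular.integral_prod_pos {ι : Type*} [Fintype ι]
    {U : I01 × I01 → ℝ} (hU : IsDensityRegular U) (hm : Measurable U) (hU0 : ∀ p, 0 ≤ U p)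
    (hU1 : ∀ p, U p ≤ 1) {E : Finset (ι × ι)} (hE : ∀ e ∈ E, e.1 ≠ e.2) {x : ι → I01}
    (hx : ∀ e ∈ E, U (x e.1, x e.2) ≠ 0) :
    0 < ∫ y : ι → I01, ∏ e ∈ E, U (y e.1, y e.2) := by
  have hpos := volume_setOf_forall_toPlane_mem_pos
    (measurableEmbedding_toPlane.measurableSet_image.2 (measurableSet_support hm)) hE
    fun e he => hU _ (hx e he)
  simp only [measurableEmbedding_toPlane.injective.mem_set_image] at hpos
  exact integral_prod_pos_of_measure_pos hm hU0 hU1 (fun p hp => (hU0 p).lt_of_ne' hp) hpos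

theorem exists_measurable_symm_ae_eq {α : Type*} [MeasurableSpace α] {μ : Measure α} [SFinite μ]
    {W : α × α → ℝ} (hsymm : ∀ x y, W (x, y) = W (y, x)) (hW : AEMeasurable W (μ.prod μ))
    (hW01 : ∀ p, W p ∈ Icc (0 : ℝ) 1) :
    ∃ W₀ : α × α → ℝ, Measurable W₀ ∧ (∀ x y, W₀ (x, y) = W₀ (y, x)) ∧
      (∀ p, W₀ p ∈ Icc (0 : ℝ) 1) ∧ W₀ =ᵐ[μ.prod μ] W := by
  set g := hW.mk W
  have hswap : (g ∘ Prod.swap) =ᵐ[μ.prod μ] (W ∘ Prod.swap) :=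
    Measure.measurePreserving_swap.quasiMeasurePreserving.ae_eq hW.ae_eq_mk.symm
  refine ⟨fun p => max 0 (min 1 ((g p + g p.swap) / 2)), by fun_prop, fun x y => ?_,
    fun p => ⟨le_max_left _ _, max_le zero_le_one (min_le_left _ _)⟩, ?_⟩
  · simp only [Prod.swap_prod_mk, add_comm]
  · filter_upwards [hW.ae_eq_mk, hswap] with p hp hps
    obtain ⟨h0, h1⟩ := hW01 p
    simp only [Function.comp_apply] at hps
    rw [hps, show g p = W p from hp.symm, show W p.swap = W p from (hsymm _ _).symm,
      add_self_div_two, min_eq_right h1, max_eq_right h0]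

theorem exists_isDensityRegular_ae_eq {W₀ : I01 × I01 → ℝ} (hm : Measurable W₀)
    (hsymm : ∀ x y, W₀ (x, y) = W₀ (y, x)) (h01 : ∀ p, W₀ p ∈ Icc (0 : ℝ) 1) :
    ∃ U : I01 × I01 → ℝ, Measurable U ∧ (∀ x y, U (x, y) = U (y, x)) ∧
      (∀ p, U p ∈ Icc (0 : ℝ) 1) ∧ U =ᵐ[volume] W₀ ∧ IsDensityRegular U := by
  set T := toPlane '' Function.support W₀
  have hT : MeasurableSet T :=
    measurableEmbedding_toPlane.measurableSet_image.2 (measurableSet_support hm)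
  have hTswap : Prod.swap ⁻¹' T = T := by
    ext ⟨a, b⟩
    simp only [T, Function.support, mem_preimage, Prod.swap_prod_mk, mem_image, mem_ofPred_eq,
      Prod.exists, Prod.map_apply, Prod.mk.injEq]
    constructor <;> rintro ⟨x, y, hxy, rfl, rfl⟩ <;> exact ⟨y, x, by rwa [hsymm], rfl, rfl⟩
  obtain ⟨S, hST, hSm, hSswap, hSae, hSdens⟩ :=
    exists_subset_invariant_forall_isDensityPoint volume hT Prod.swap_swap
      Measure.measurePreserving_swap.quasiMeasurePreserving hTswap
  have hsupp : Function.support ((toPlane ⁻¹' S).indicator W₀) = toPlane ⁻¹' S := by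
    rw [support_indicator, inter_eq_left]
    exact fun p hp => measurableEmbedding_toPlane.injective.mem_set_image.1 (hST hp)
  refine ⟨(toPlane ⁻¹' S).indicator W₀, hm.indicator (measurableEmbedding_toPlane.measurable hSm),
    fun x y => ?_, fun p => ?_, ?_, fun p hp => ?_⟩
  · have hmem : (y, x) ∈ toPlane ⁻¹' S ↔ (x, y) ∈ toPlane ⁻¹' S :=
      Set.ext_iff.1 hSswap (toPlane (x, y))
    by_cases h : (x, y) ∈ toPlane ⁻¹' S
    · rw [indicator_of_mem h, indicator_of_mem (hmem.2 h), hsymm]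
    · rw [indicator_of_notMem h, indicator_of_notMem (mt hmem.1 h)]
  · by_cases h : p ∈ toPlane ⁻¹' S
    · rw [indicator_of_mem h]; exact h01 p
    · rw [indicator_of_notMem h]; exact ⟨le_rfl, zero_le_one⟩
  · calc (toPlane ⁻¹' S).indicator W₀
        =ᵐ[volume] (toPlane ⁻¹' T).indicator W₀ :=
          indicator_ae_eq_of_ae_eq_set (quasiMeasurePreserving_toPlane.preimage_ae_eq hSae)
      _ = W₀ := by
          rw [measurableEmbedding_toPlane.injective.preimage_image, indicator_support]
  · rw [hsupp, image_preimage_eq_of_subset (hST.trans (image_subset_range _ _))]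
    refine hSdens _ ?_
    rw [← mem_preimage (f := toPlane), ← hsupp]
    exact hp

/-- The Infinite Removal Lemma: every graphon equals a.e. a graphon `U` such that for
every graph `F`, either `t(F,U) > 0` or `U` is `F`-free. -/
theorem infinite_removal_lemma (W : I01 × I01 → ℝ)
    (hW : IsGraphon W) (hW01 : ∀ p, W p ∈ Set.Icc (0 : ℝ) 1) :
    ∃ U : I01 × I01 → ℝ, IsGraphon U ∧ (∀ p, U p ∈ Set.Icc (0 : ℝ) 1) ∧
      U =ᵐ[volume] W ∧
      ∀ (k : ℕ) (F : SimpleGraph (Fin k)), 0 < homDensity F U ∨ GraphonFree F U := by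
  obtain ⟨hsymm, -, hmeas⟩ := hW
  obtain ⟨W₀, hW₀m, hW₀symm, hW₀01, hW₀W⟩ := exists_measurable_symm_ae_eq hsymm hmeas hW01
  obtain ⟨U, hUm, hUsymm, hU01, hUW₀, hUreg⟩ := exists_isDensityRegular_ae_eq hW₀m hW₀symm hW₀01
  have hUbdd : ∀ p, |U p| ≤ 1 := fun p => abs_le.2 ⟨by linarith [(hU01 p).1], (hU01 p).2⟩
  refine ⟨U, ⟨hUsymm, ⟨1, hUbdd⟩, hUm.aemeasurable⟩, hU01, hUW₀.trans hW₀W,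
    fun k F => or_iff_not_imp_right.2 fun hfree => ?_⟩
  obtain ⟨x, hx⟩ : ∃ x : Fin k → I01, ∀ i j, F.Adj i j → U (x i, x j) ≠ 0 := by
    simpa [GraphonFree] using hfree
  refine hUreg.integral_prod_pos (x := x) hUm (fun p => (hU01 p).1) (fun p => (hU01 p).2)
    (fun e he => ?_) (fun e he => ?_) <;> simp only [Finset.mem_filter] at he
  exacts [he.2.1.ne, hx _ _ he.2.2]

end
end
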